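/- arXiv:2502.18483 — 4 statements merged into one kernel-verified Lean document; each statement's English description precedes it below -/
import Mathlib

section
/- Sub-optimality of the myopic policy is unbounded: for every d > 0 there exists a 2×2 instance (two types, two categories, uniform prior) such that the value of the myopic policy (which greedily recommends the category with highest immediate expected reward) is at most V*/d, where V* is the optimal value. Concretely, with P(k1,m1) = 8d/(1+8d), P(k1,m2) = 0, P(k2,m1) = P(k2,m2) = 0.8, and uniform prior, the myopic policy achieves value 4 while the policy always recommending k1 achieves value 4d. -/
open Finset

/-- Value of policy `π` under belief `b`. -/
noncomputable def V {K M : Type*} [Fintype M] (P : K → M → ℝ) (π : ℕ → K)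
    (b : M → ℝ) : ℝ :=
  ∑ m : M, b m * ∑' t : ℕ, ∏ j ∈ Finset.range (t + 1), P (π j) m

lemma tsum_pow_succ (p : ℝ) (h0 : 0 ≤ p) (h1 : p < 1) :
    ∑' t : ℕ, p ^ (t + 1) = p / (1 - p) := by
  simp_rw [pow_succ']
  rw [tsum_mul_left, tsum_geometric_of_lt_one h0 h1, div_eq_mul_inv]

/-- Sub-optimality of the myopic policy is unbounded: for every `d > 0`, in the
2×2 instance with `P(k1,m1) = 8d/(1+8d)`, `P(k1,m2) = 0`,
`P(k2,m1) = P(k2,m2) = 0.8` and uniform prior, the myopic policy (constantly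
recommending `k2`) achieves value `4`, the constant `k1` policy achieves value
`4d`, and hence the myopic value times `d` is at most the optimal value. -/
theorem myopic_suboptimal (d : ℝ) (hd : 0 < d) :
    let P : Fin 2 → Fin 2 → ℝ := ![![8 * d / (1 + 8 * d), 0], ![0.8, 0.8]]
    let b : Fin 2 → ℝ := fun _ => 1 / 2
    V P (fun _ => 1) b = 4 ∧
    V P (fun _ => 0) b = 4 * d ∧
    V P (fun _ => 1) b * d ≤ ⨆ π : ℕ → Fin 2, V P π b := by
  intro P b
  have hden : (0:ℝ) < 1 + 8 * d := by linarith
  have hp0 : (0:ℝ) ≤ 8 * d / (1 + 8 * d) := by positivity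
  have hp1 : 8 * d / (1 + 8 * d) < 1 := by
    rw [div_lt_one hden]; linarith
  have hPnn : ∀ k m : Fin 2, 0 ≤ P k m := by
    intro k m
    fin_cases k <;> fin_cases m <;> simp [P] <;> norm_num
    · exact hp0
  set c : ℝ := max (8 * d / (1 + 8 * d)) 0.8 with hc
  have hc0 : (0:ℝ) ≤ c := le_trans hp0 (le_max_left _ _)
  have hc1 : c < 1 := by
    apply max_lt hp1; norm_num
  have hPle : ∀ k m : Fin 2, P k m ≤ c := by
    intro k m
    fin_cases k <;> fin_cases m <;>
      simp only [P, Matrix.cons_val_zero, Matrix.cons_val_one, Matrix.head_cons, hc]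
    · exact le_max_left _ _
    · exact le_trans hp0 (le_max_left _ _)
    · exact le_max_right _ _
    · exact le_max_right _ _
  have h1 : V P (fun _ => 1) b = 4 := by
    have h08 : ∀ m : Fin 2, P 1 m = 0.8 := by
      intro m; fin_cases m <;> simp [P]
    simp only [V, Fin.sum_univ_two, h08, prod_const, card_range]
    rw [tsum_pow_succ (0.8) (by norm_num) (by norm_num)]
    show (b 0) * _ + (b 1) * _ = 4
    simp only [b]; norm_num
  have h2 : V P (fun _ => 0) b = 4 * d := by
    simp only [V, Fin.sum_univ_two, prod_const, card_range]
    have e0 : P 0 0 = 8 * d / (1 + 8 * d) := by simp [P]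
    have e1 : P 0 1 = 0 := by simp [P]
    rw [e0, e1, tsum_pow_succ _ hp0 hp1]
    have : ∑' t : ℕ, (0:ℝ) ^ (t + 1) = 0 := by
      simp
    rw [this]
    have hq : 8 * d / (1 + 8 * d) / (1 - 8 * d / (1 + 8 * d)) = 8 * d := by
      field_simp
      ring
    rw [hq]
    show (b 0) * _ + (b 1) * _ = 4 * d
    simp only [b]; ring
  refine ⟨h1, h2, ?_⟩
  rw [h1]
  have hbdd : BddAbove (Set.range fun π : ℕ → Fin 2 => V P π b) := by
    refine ⟨c / (1 - c), ?_⟩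
    rintro x ⟨π, rfl⟩
    have hsumg : Summable (fun t : ℕ => c ^ (t + 1)) := by
      simpa [pow_succ'] using (summable_geometric_of_lt_one hc0 hc1).mul_left c
    have hle : ∀ m : Fin 2, ∑' t : ℕ, ∏ j ∈ Finset.range (t + 1), P (π j) m
        ≤ c / (1 - c) := by
      intro m
      have hterm : ∀ t : ℕ, ∏ j ∈ Finset.range (t + 1), P (π j) m ≤ c ^ (t + 1) := by
        intro t
        calc ∏ j ∈ Finset.range (t + 1), P (π j) m
            ≤ ∏ _j ∈ Finset.range (t + 1), c :=
              Finset.prod_le_prod (fun j _ => hPnn _ _) (fun j _ => hPle _ _)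
          _ = c ^ (t + 1) := by rw [prod_const, card_range]
      have hnn : ∀ t : ℕ, 0 ≤ ∏ j ∈ Finset.range (t + 1), P (π j) m :=
        fun t => Finset.prod_nonneg fun j _ => hPnn _ _
      have hsum : Summable (fun t : ℕ => ∏ j ∈ Finset.range (t + 1), P (π j) m) :=
        Summable.of_nonneg_of_le hnn hterm hsumg
      calc ∑' t : ℕ, ∏ j ∈ Finset.range (t + 1), P (π j) m
          ≤ ∑' t : ℕ, c ^ (t + 1) := Summable.tsum_le_tsum hterm hsum hsumg
        _ = c / (1 - c) := tsum_pow_succ c hc0 hc1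
    calc V P π b = ∑ m : Fin 2, b m * ∑' t : ℕ, ∏ j ∈ Finset.range (t + 1), P (π j) m := rfl
      _ ≤ ∑ m : Fin 2, b m * (c / (1 - c)) := by
          apply Finset.sum_le_sum
          intro m _
          have hb : (0:ℝ) ≤ b m := by norm_num [b]
          exact mul_le_mul_of_nonneg_left (hle m) hb
      _ = c / (1 - c) := by simp only [b, Fin.sum_univ_two]; ring
  have := le_ciSup hbdd (fun _ => (0 : Fin 2))
  rw [h2] at this
  linarith [this]
end

section
/- Variance lower bound for unconcentrated distributions: let X be a random variable taking finitely many values in [0,1] such that no single value has probability exceeding 1 − δ, and such that any two distinct values of X differ by at least c > 0. Then Var(X) ≥ δ(1−δ)c². -/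
open Finset

/-- Variance lower bound for unconcentrated distributions: if `X` takes value
`x m ∈ [0,1]` with probability `b m`, no value has probability exceeding
`1 − δ`, and distinct values differ by at least `c > 0`, then
`Var(X) ≥ δ(1−δ)c²`. -/
theorem variance_lower_bound {M : Type*} [Fintype M] [Nonempty M]
    (x : M → ℝ) (hx : ∀ m, 0 ≤ x m ∧ x m ≤ 1)
    (b : M → ℝ) (hb0 : ∀ m, 0 ≤ b m) (hbsum : ∑ m : M, b m = 1)
    (δ c : ℝ) (hδ0 : 0 < δ) (hδ : δ ≤ 1 / 2) (hc : 0 < c)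
    (hconc : ∀ m, b m ≤ 1 - δ)
    (hsep : ∀ m m', m ≠ m' → c ≤ |x m - x m'|) :
    δ * (1 - δ) * c ^ 2 ≤
      (∑ m : M, b m * (x m) ^ 2) - (∑ m : M, b m * x m) ^ 2 := by
  classical
  set Q : ℝ := ∑ m : M, b m ^ 2 with hQ
  -- Step 1: Q ≤ (1-δ)^2 + δ^2
  have hQle : Q ≤ (1 - δ) ^ 2 + δ ^ 2 := by
    obtain ⟨m0, -, hm0⟩ := Finset.exists_max_image (Finset.univ : Finset M) b
      Finset.univ_nonempty
    set p := b m0 with hp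
    have hp0 : 0 ≤ p := hb0 m0
    have hpδ : p ≤ 1 - δ := hconc m0
    have hQsplit : Q = p ^ 2 + ∑ m ∈ Finset.univ.erase m0, b m ^ 2 := by
      rw [hQ, ← Finset.add_sum_erase _ _ (Finset.mem_univ m0)]
    have hrest : ∑ m ∈ Finset.univ.erase m0, b m = 1 - p := by
      have := Finset.add_sum_erase Finset.univ b (Finset.mem_univ m0)
      rw [hbsum] at this; linarith
    have hble : ∀ m ∈ Finset.univ.erase m0, b m ≤ 1 - p := by
      intro m hm
      calc b m ≤ ∑ m' ∈ Finset.univ.erase m0, b m' :=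
            Finset.single_le_sum (fun i _ => hb0 i) hm
        _ = 1 - p := hrest
    rcases le_or_gt p (1 / 2) with hhalf | hhalf
    · have h2 : ∑ m ∈ Finset.univ.erase m0, b m ^ 2 ≤
          ∑ m ∈ Finset.univ.erase m0, p * b m := by
        refine Finset.sum_le_sum fun m hm => ?_
        have := hm0 m (Finset.mem_univ m)
        nlinarith [hb0 m]
      rw [← Finset.mul_sum, hrest] at h2
      nlinarith
    · have h2 : ∑ m ∈ Finset.univ.erase m0, b m ^ 2 ≤
          ∑ m ∈ Finset.univ.erase m0, (1 - p) * b m := by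
        refine Finset.sum_le_sum fun m hm => ?_
        have := hble m hm
        nlinarith [hb0 m]
      rw [← Finset.mul_sum, hrest] at h2
      nlinarith [sq_nonneg (p - (1 - δ)), sq_nonneg (p + δ - 1)]
  -- Step 2: the double-sum identity
  have hA : ∑ m : M, ∑ m' : M, b m * (b m' * x m' ^ 2) =
      (∑ m : M, b m) * ∑ m : M, b m * x m ^ 2 :=
    (Finset.sum_mul_sum _ _ _ _).symm
  have hB : ∑ m : M, ∑ m' : M, (b m * x m ^ 2) * b m' =
      (∑ m : M, b m * x m ^ 2) * ∑ m : M, b m :=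
    (Finset.sum_mul_sum _ _ _ _).symm
  have hC : ∑ m : M, ∑ m' : M, (b m * x m) * (b m' * x m') =
      (∑ m : M, b m * x m) * ∑ m : M, b m * x m :=
    (Finset.sum_mul_sum _ _ _ _).symm
  have hid : ∑ m : M, ∑ m' : M, b m * b m' * (x m - x m') ^ 2 =
      2 * ((∑ m : M, b m * (x m) ^ 2) - (∑ m : M, b m * x m) ^ 2) := by
    calc ∑ m : M, ∑ m' : M, b m * b m' * (x m - x m') ^ 2
        = ∑ m : M, ∑ m' : M, (b m * (b m' * x m' ^ 2) + (b m * x m ^ 2) * b m'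
            - 2 * ((b m * x m) * (b m' * x m'))) :=
          Finset.sum_congr rfl fun m _ =>
            Finset.sum_congr rfl fun m' _ => by ring
      _ = (∑ m : M, ∑ m' : M, b m * (b m' * x m' ^ 2))
            + (∑ m : M, ∑ m' : M, (b m * x m ^ 2) * b m')
            - ∑ m : M, ∑ m' : M, 2 * ((b m * x m) * (b m' * x m')) := by
          simp only [Finset.sum_add_distrib, Finset.sum_sub_distrib]
      _ = (∑ m : M, ∑ m' : M, b m * (b m' * x m' ^ 2))
            + (∑ m : M, ∑ m' : M, (b m * x m ^ 2) * b m')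
            - 2 * ∑ m : M, ∑ m' : M, (b m * x m) * (b m' * x m') := by
          simp only [← Finset.mul_sum]
      _ = 2 * ((∑ m : M, b m * (x m) ^ 2) - (∑ m : M, b m * x m) ^ 2) := by
          rw [hA, hB, hC, hbsum]; ring
  -- Step 3: lower bound the double sum
  have hterm : ∀ m m' : M,
      b m * b m' * c ^ 2 - (if m = m' then b m * b m' * c ^ 2 else 0)
        ≤ b m * b m' * (x m - x m') ^ 2 := by
    intro m m'
    by_cases h : m = m'
    · subst h
      have h0 : (0:ℝ) ≤ b m * b m * (x m - x m) ^ 2 :=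
        mul_nonneg (mul_nonneg (hb0 m) (hb0 m)) (sq_nonneg _)
      simpa using h0
    · simp only [if_neg h, sub_zero]
      have hcle := hsep m m' h
      have h1 : c ^ 2 ≤ (x m - x m') ^ 2 := by
        have := sq_abs (x m - x m')
        nlinarith [abs_nonneg (x m - x m')]
      have hbb : 0 ≤ b m * b m' := mul_nonneg (hb0 m) (hb0 m')
      nlinarith
  have d1 : ∑ m : M, ∑ m' : M, (if m = m' then b m * b m' * c ^ 2 else 0) =
      ∑ m : M, b m * b m * c ^ 2 := by
    refine Finset.sum_congr rfl fun m _ => ?_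
    simp
  have d2 : ∑ m : M, ∑ m' : M, b m * b m' * c ^ 2 = c ^ 2 := by
    have e : ∑ m : M, ∑ m' : M, b m * b m' * c ^ 2 =
        (∑ m : M, ∑ m' : M, b m * b m') * c ^ 2 := by
      simp only [← Finset.sum_mul]
    rw [e, ← Finset.sum_mul_sum, hbsum, one_mul, one_mul]
  have d3 : ∑ m : M, b m * b m * c ^ 2 = Q * c ^ 2 := by
    rw [hQ, ← Finset.sum_mul]
    congr 1
    exact Finset.sum_congr rfl fun m _ => (sq (b m)).symm
  have hlow : c ^ 2 * (1 - Q) ≤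
      ∑ m : M, ∑ m' : M, b m * b m' * (x m - x m') ^ 2 := by
    calc c ^ 2 * (1 - Q)
        = (∑ m : M, ∑ m' : M, b m * b m' * c ^ 2)
            - ∑ m : M, ∑ m' : M, (if m = m' then b m * b m' * c ^ 2 else 0) := by
          rw [d1, d2, d3]; ring
      _ = ∑ m : M, ∑ m' : M, (b m * b m' * c ^ 2
            - (if m = m' then b m * b m' * c ^ 2 else 0)) := by
          simp only [Finset.sum_sub_distrib]
      _ ≤ ∑ m : M, ∑ m' : M, b m * b m' * (x m - x m') ^ 2 :=
          Finset.sum_le_sum fun m _ => Finset.sum_le_sum fun m' _ => hterm m m'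
  -- Step 4: combine
  have hc2 : 0 ≤ c ^ 2 := sq_nonneg c
  have h1Q : 2 * δ * (1 - δ) ≤ 1 - Q := by nlinarith
  nlinarith [mul_le_mul_of_nonneg_left h1Q hc2]
end

section
/- Concentrated beliefs cannot jump: let b be a belief with b(m) ≥ 1 − c²/4 for some type m, where 0 < c ≤ 1 and the recommended category k satisfies P(k, m') ≥ c for the optimal-recommendation lower bound. Then for any other type m' ≠ m, the Bayesian-updated belief b' = τ(b,k) satisfies b'(m') ≤ c/(4 − c²) ≤ 1/3 < 1 − c²/4. Hence b' is not (c²/4)-concentrated on m'. -/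
open Finset

/-- Bayesian update of `b` after positive feedback on `k`. -/
noncomputable def tau {K M : Type*} [Fintype M] (P : K → M → ℝ) (b : M → ℝ)
    (k : K) : M → ℝ := fun m => b m * P k m / ∑ m' : M, b m' * P k m'

/-- Concentrated beliefs cannot jump: if `b` is concentrated on `m`
(`b m ≥ 1 − c²/4`) and the recommended category `k` has `P k m ≥ c`, then
for any `m' ≠ m` the updated belief satisfies
`τ(b,k)(m') ≤ c/(4−c²) ≤ 1/3 < 1 − c²/4`; hence it is not `(c²/4)`-concentrated
on `m'`. -/
theorem concentrated_no_jump {K M : Type*} [Fintype M]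
    (P : K → M → ℝ) (hP : ∀ k m, 0 ≤ P k m ∧ P k m ≤ 1)
    (c : ℝ) (hc0 : 0 < c) (hc1 : c ≤ 1)
    (b : M → ℝ) (hb0 : ∀ m'', 0 ≤ b m'') (hbsum : ∑ m'' : M, b m'' = 1)
    (m : M) (hconc : 1 - c ^ 2 / 4 ≤ b m)
    (k : K) (hk : c ≤ P k m)
    (m' : M) (hmm' : m' ≠ m) :
    tau P b k m' ≤ c / (4 - c ^ 2) ∧
    c / (4 - c ^ 2) ≤ 1 / 3 ∧
    (1 : ℝ) / 3 < 1 - c ^ 2 / 4 := by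
  classical
  have hc2 : c ^ 2 ≤ 1 := by nlinarith
  have hD : (1 - c ^ 2 / 4) * c ≤ ∑ m'' : M, b m'' * P k m'' := by
    calc (1 - c ^ 2 / 4) * c ≤ b m * P k m := by
          have h0 := (hP k m).1
          nlinarith [hb0 m]
      _ ≤ ∑ m'' : M, b m'' * P k m'' := by
          apply Finset.single_le_sum (fun i _ => mul_nonneg (hb0 i) (hP k i).1)
          exact Finset.mem_univ m
  have hDpos : (0:ℝ) < (1 - c ^ 2 / 4) * c := by nlinarith
  have hbm' : b m' ≤ c ^ 2 / 4 := by
    have : b m + b m' ≤ ∑ m'' : M, b m'' := by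
      have := Finset.add_sum_erase Finset.univ b (Finset.mem_univ m)
      have hmem : m' ∈ Finset.univ.erase m := Finset.mem_erase.mpr ⟨hmm', Finset.mem_univ m'⟩
      have h2 := Finset.single_le_sum (f := b) (fun i _ => hb0 i) hmem
      linarith [this, h2]
    linarith [hbsum ▸ this]
  refine ⟨?_, ?_, ?_⟩
  · have hnum : b m' * P k m' ≤ c ^ 2 / 4 := by
      have := (hP k m').2
      nlinarith [hb0 m', (hP k m').1]
    have h1 : tau P b k m' ≤ (c ^ 2 / 4) / ((1 - c ^ 2 / 4) * c) := by
      unfold tau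
      exact div_le_div₀ (by positivity) hnum hDpos hD
    have h2 : (c ^ 2 / 4) / ((1 - c ^ 2 / 4) * c) = c / (4 - c ^ 2) := by
      rw [div_eq_div_iff hDpos.ne' (by nlinarith : (4 - c ^ 2) ≠ 0)]
      ring
    linarith [h2 ▸ h1]
  · rw [div_le_div_iff₀ (by nlinarith) (by norm_num)]; nlinarith
  · nlinarith
end

section
/- Myopic optimality near a vertex: let m be a type, k = argmax_{k'} P(k',m) its favorite category with gap P(k,m) − P(k',m) ≥ c for all k' ≠ k, all entries of P at most 1 − c with 0 < c ≤ 1/2, and let b be a belief with b(m) ≥ 1 − c²/4. Then the constant policy (k)^∞ satisfies V^{(k)^∞}(b) ≥ V^π(b) for every policy π whose first action differs from k; in particular the first action of every optimal policy at b is k. The key inequality is (1 − c²/4)·P(k,m)/(1 − P(k,m)) ≥ (P(k,m) − c + c²/4)·1/(1 − P(k,m)) + c/2 − c²/2. -/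
open Finset

private lemma geom_shift_summable {x : ℝ} (h0 : 0 ≤ x) (h1 : x < 1) :
    Summable (fun t : ℕ => x ^ (t + 1)) := by
  have hs : Summable (fun t : ℕ => x * x ^ t) :=
    (summable_geometric_of_lt_one h0 h1).mul_left x
  simpa [pow_succ, mul_comm] using hs

private lemma geom_shift_tsum {x : ℝ} (h0 : 0 ≤ x) (h1 : x < 1) :
    ∑' t : ℕ, x ^ (t + 1) = x * (1 - x)⁻¹ := by
  calc ∑' t : ℕ, x ^ (t + 1) = ∑' t : ℕ, x * x ^ t := by
        simp [pow_succ, mul_comm]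
    _ = x * ∑' t : ℕ, x ^ t := tsum_mul_left
    _ = x * (1 - x)⁻¹ := by rw [tsum_geometric_of_lt_one h0 h1]

/-- Myopic optimality near a vertex: if `b` is concentrated on type `m`
(`b m ≥ 1 − c²/4`), `k` is `m`'s favorite category with gap at least `c` over
every other category, and all entries of `P` are at most `1 − c` with
`0 < c ≤ 1/2`, then the constant policy `(k)^∞` dominates every policy whose
first action differs from `k`. Moreover the key arithmetic inequality holds:
for `0 ≤ p ≤ 1 − c`,
`(1 − c²/4)·p/(1−p) ≥ (p − c + c²/4)/(1−p) + c/2 − c²/2`. -/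
theorem myopic_near_vertex {K M : Type*} [Fintype M] [Fintype K] [Nonempty K]
    (P : K → M → ℝ) (c : ℝ) (hc0 : 0 < c) (hc1 : c ≤ 1 / 2)
    (hP0 : ∀ k m, 0 ≤ P k m) (hP1 : ∀ k m, P k m ≤ 1 - c)
    (m : M) (k : K) (hfav : ∀ k' : K, k' ≠ k → c ≤ P k m - P k' m)
    (b : M → ℝ) (hb0 : ∀ m', 0 ≤ b m') (hbsum : ∑ m' : M, b m' = 1)
    (hconc : 1 - c ^ 2 / 4 ≤ b m) :
    (∀ π : ℕ → K, π 0 ≠ k → V P π b ≤ V P (fun _ => k) b) ∧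
    (∀ q : ℝ, 0 ≤ q → q ≤ 1 - c →
      (q - c + c ^ 2 / 4) / (1 - q) + c / 2 - c ^ 2 / 2 ≤
        (1 - c ^ 2 / 4) * q / (1 - q)) := by
  classical
  have hc' : c < 1 := lt_of_le_of_lt hc1 (by norm_num)
  have hxc0 : (0:ℝ) ≤ 1 - c := by linarith
  have hxc1 : (1:ℝ) - c < 1 := by linarith
  constructor
  · intro π hne
    set p := P k m with hp
    have hp0 : 0 ≤ p := hP0 k m
    have hp1 : p < 1 := lt_of_le_of_lt (hP1 k m) hxc1
    have h1p : (0:ℝ) < 1 - p := by linarith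
    have hgap : c ≤ p - P (π 0) m := hfav (π 0) hne
    have hpc : 0 ≤ p - c := by have := hP0 (π 0) m; linarith
    -- basic bounds on products
    have hprod_nonneg : ∀ (σ : ℕ → K) (m' : M) (t : ℕ),
        0 ≤ ∏ j ∈ Finset.range (t + 1), P (σ j) m' := by
      intro σ m' t
      exact Finset.prod_nonneg fun j _ => hP0 _ _
    have hprod_le : ∀ (σ : ℕ → K) (m' : M) (t : ℕ),
        ∏ j ∈ Finset.range (t + 1), P (σ j) m' ≤ (1 - c) ^ (t + 1) := by
      intro σ m' t
      calc ∏ j ∈ Finset.range (t + 1), P (σ j) m'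
          ≤ ∏ _j ∈ Finset.range (t + 1), (1 - c) :=
            Finset.prod_le_prod (fun j _ => hP0 _ _) (fun j _ => hP1 _ _)
        _ = (1 - c) ^ (t + 1) := by simp
    have hsummable : ∀ (σ : ℕ → K) (m' : M),
        Summable (fun t : ℕ => ∏ j ∈ Finset.range (t + 1), P (σ j) m') := by
      intro σ m'
      exact Summable.of_nonneg_of_le (hprod_nonneg σ m') (hprod_le σ m')
        (geom_shift_summable hxc0 hxc1)
    -- tsum upper bound (1-c)/c for any policy/type
    have htsum_ub : ∀ (σ : ℕ → K) (m' : M),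
        ∑' t : ℕ, ∏ j ∈ Finset.range (t + 1), P (σ j) m' ≤ (1 - c) * c⁻¹ := by
      intro σ m'
      have := Summable.tsum_le_tsum (hprod_le σ m') (hsummable σ m')
        (geom_shift_summable hxc0 hxc1)
      rw [geom_shift_tsum hxc0 hxc1] at this
      simpa using this
    have htsum_nonneg : ∀ (σ : ℕ → K) (m' : M),
        0 ≤ ∑' t : ℕ, ∏ j ∈ Finset.range (t + 1), P (σ j) m' := by
      intro σ m'
      exact tsum_nonneg (hprod_nonneg σ m')
    -- value of constant policy on type m
    have hconst : ∑' t : ℕ, ∏ j ∈ Finset.range (t + 1), P ((fun _ => k) j) m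
        = p * (1 - p)⁻¹ := by
      have : ∀ t : ℕ, ∏ j ∈ Finset.range (t + 1), P ((fun _ => k) j) m
          = p ^ (t + 1) := by
        intro t; simp [hp]
      rw [tsum_congr this, geom_shift_tsum hp0 hp1]
    -- tsum bound for π on type m
    have hπm : ∑' t : ℕ, ∏ j ∈ Finset.range (t + 1), P (π j) m
        ≤ (p - c) * (1 - p)⁻¹ := by
      have hfac : ∀ j : ℕ, P (π j) m ≤ p := by
        intro j
        by_cases h : π j = k
        · rw [h]
        · have := hfav (π j) h; linarith
      have hterm : ∀ t : ℕ, ∏ j ∈ Finset.range (t + 1), P (π j) m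
          ≤ (p - c) * p ^ t := by
        intro t
        rw [Finset.prod_range_succ']
        have h1 : ∏ j ∈ Finset.range t, P (π (j + 1)) m ≤ p ^ t := by
          calc ∏ j ∈ Finset.range t, P (π (j + 1)) m
              ≤ ∏ _j ∈ Finset.range t, p :=
                Finset.prod_le_prod (fun j _ => hP0 _ _) (fun j _ => hfac _)
            _ = p ^ t := by simp
        have h2 : P (π 0) m ≤ p - c := by linarith
        have h3 : 0 ≤ ∏ j ∈ Finset.range t, P (π (j + 1)) m :=
          Finset.prod_nonneg fun j _ => hP0 _ _
        calc (∏ j ∈ Finset.range t, P (π (j + 1)) m) * P (π 0) m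
            ≤ p ^ t * (p - c) :=
              mul_le_mul h1 h2 (hP0 _ _) (pow_nonneg hp0 t)
          _ = (p - c) * p ^ t := by ring
      have hs2 : Summable (fun t : ℕ => (p - c) * p ^ t) :=
        (summable_geometric_of_lt_one hp0 hp1).mul_left _
      have := Summable.tsum_le_tsum hterm (hsummable π m) hs2
      rwa [tsum_mul_left, tsum_geometric_of_lt_one hp0 hp1] at this
    -- split the value sums at m
    have hmem : m ∈ (Finset.univ : Finset M) := Finset.mem_univ m
    have hbm1 : b m ≤ 1 := by
      rw [← hbsum]
      exact Finset.single_le_sum (fun i _ => hb0 i) hmem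
    have hrest : ∑ m' ∈ Finset.univ.erase m, b m' = 1 - b m := by
      have := Finset.add_sum_erase Finset.univ b hmem
      rw [hbsum] at this; linarith
    have hsplit : ∀ (σ : ℕ → K),
        V P σ b = b m * (∑' t : ℕ, ∏ j ∈ Finset.range (t + 1), P (σ j) m)
          + ∑ m' ∈ Finset.univ.erase m,
              b m' * ∑' t : ℕ, ∏ j ∈ Finset.range (t + 1), P (σ j) m' := by
      intro σ
      rw [V, ← Finset.add_sum_erase Finset.univ _ hmem]
    -- upper bound V π and lower bound V const
    have hub : V P π b ≤ b m * ((p - c) * (1 - p)⁻¹) + (1 - b m) * ((1 - c) * c⁻¹) := by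
      rw [hsplit π, ← hrest, Finset.sum_mul]
      gcongr with m' hm'
      · exact hb0 m
      · exact hb0 m'
      · exact htsum_ub π m'
    have hlb : b m * (p * (1 - p)⁻¹) ≤ V P (fun _ => k) b := by
      rw [hsplit (fun _ => k), hconst]
      have : 0 ≤ ∑ m' ∈ Finset.univ.erase m,
          b m' * ∑' t : ℕ, ∏ j ∈ Finset.range (t + 1), P ((fun _ => k) j) m' :=
        Finset.sum_nonneg fun m' _ => mul_nonneg (hb0 m') (htsum_nonneg _ m')
      linarith
    -- final arithmetic
    have hr1 : (1:ℝ) ≤ (1 - p)⁻¹ := by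
      rw [le_inv_comm₀ one_pos h1p]; linarith
    have hbmlb : 1 - c ^ 2 / 4 ≤ b m := hconc
    have key : b m * ((p - c) * (1 - p)⁻¹) + (1 - b m) * ((1 - c) * c⁻¹)
        ≤ b m * (p * (1 - p)⁻¹) := by
      have h1 : b m * (p * (1 - p)⁻¹) - b m * ((p - c) * (1 - p)⁻¹)
          = b m * c * (1 - p)⁻¹ := by ring
      have h2 : b m * c * (1 - p)⁻¹ ≥ b m * c := by
        nlinarith [mul_nonneg (hb0 m) hc0.le]
      have h3 : (1 - b m) * ((1 - c) * c⁻¹) ≤ (c ^ 2 / 4) * ((1 - c) * c⁻¹) := by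
        have hpos : 0 ≤ (1 - c) * c⁻¹ := mul_nonneg hxc0 (inv_nonneg.mpr hc0.le)
        have : 1 - b m ≤ c ^ 2 / 4 := by linarith
        exact mul_le_mul_of_nonneg_right this hpos
      have h4 : (c ^ 2 / 4) * ((1 - c) * c⁻¹) = c * (1 - c) / 4 := by
        field_simp
      have h5 : c * (1 - c) / 4 ≤ b m * c := by nlinarith
      linarith
    linarith
  · intro q hq0 hq1
    have h1q : (0:ℝ) < 1 - q := by linarith
    have key : (q - c + c ^ 2 / 4) + (c / 2 - c ^ 2 / 2) * (1 - q)
        ≤ (1 - c ^ 2 / 4) * q := by nlinarith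
    have heq : (q - c + c ^ 2 / 4) / (1 - q) + c / 2 - c ^ 2 / 2
        = ((q - c + c ^ 2 / 4) + (c / 2 - c ^ 2 / 2) * (1 - q)) / (1 - q) := by
      field_simp
      ring
    rw [heq, div_le_div_iff₀ h1q h1q] at *
    · nlinarith [key, h1q]
end
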